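/- arXiv:2603.14773 — 3 statements merged into one kernel-verified Lean document; each statement's English description precedes it below -/
import Mathlib

section
/- One-step hybrid-order descent inequality: let L : ℝ^{d_c} × ℝ^{d_s} → ℝ be differentiable with β-Lipschitz gradient, fix θ = (θ_c, θ_s), and let a (valued in ℝ^{d_c}) and b (valued in ℝ^{d_s}) be square-integrable random vectors satisfying E[b] = ∇_s L(θ), E[‖b‖²] ≤ ‖∇_s L(θ)‖² + Ω_s, ‖E[a] − ∇_c L(θ)‖² ≤ B, and E[‖a‖²] ≤ C₁‖∇_c L(θ)‖² + Ω_c. If C₁ ≥ 1 and 0 < η ≤ 1/(2βC₁), then E[L(θ_c − η a, θ_s − η b)] ≤ L(θ) − (η/4)‖∇L(θ)‖² + (η/2)B + (βη²/2)(Ω_c + Ω_s). -/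
/-! Along the segment `t ↦ x + t v`, the derivative of `L(x + t v) - L x - t ⟪∇L x, v⟫` is
`⟪∇L(x + t v) - ∇L x, v⟫`, of size at most `β t ‖v‖²`, so the fencing form of the mean value
theorem gives the descent lemma `|L(x + v) - L x - ⟪∇L x, v⟫| ≤ β/2 ‖v‖²`. Integrating it at the
random step `v = -η (a, b)` leaves only the means of `a`, `b` in the first-order term and their
second moments in the quadratic one. The bias of `E[a]` costs at most `(‖∇_c L‖² + B)/2` by
polarisation, and `βηC₁ ≤ 1/2` bounds the second-moment terms by `η/4 ‖∇L‖²` plus the noise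
`βη²/2 (Ω_c + Ω_s)`. -/

open MeasureTheory
open scoped InnerProductSpace

section Descent

variable {H : Type*} [NormedAddCommGroup H] [InnerProductSpace ℝ H] [CompleteSpace H]
  {L : H → ℝ} {β : ℝ}

theorem abs_sub_sub_inner_gradient_le (hL : Differentiable ℝ L)
    (hLip : ∀ x y, ‖gradient L x - gradient L y‖ ≤ β * ‖x - y‖) (x v : H) :
    |L (x + v) - L x - ⟪gradient L x, v⟫_ℝ| ≤ β / 2 * ‖v‖ ^ 2 := by
  set g := gradient L x
  have hderiv (t : ℝ) : HasDerivAt (fun t : ℝ => L (x + t • v) - L x - t * ⟪g, v⟫_ℝ)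
      (⟪gradient L (x + t • v) - g, v⟫_ℝ) t := by
    have hline : HasDerivAt (fun t : ℝ => x + t • v) v t := by
      simpa using ((hasDerivAt_id t).smul_const v).const_add x
    have hcomp : HasDerivAt (fun t : ℝ => L (x + t • v)) ⟪gradient L (x + t • v), v⟫_ℝ t :=
      (hL _).hasGradientAt.hasFDerivAt.comp_hasDerivAt t hline
    rw [inner_sub_left]
    exact (hcomp.sub_const (L x)).sub (by simpa using (hasDerivAt_id t).mul_const ⟪g, v⟫_ℝ)
  have hbound (t : ℝ) (ht : t ∈ Set.Ico (0 : ℝ) 1) :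
      ‖⟪gradient L (x + t • v) - g, v⟫_ℝ‖ ≤ β * t * ‖v‖ ^ 2 :=
    calc ‖⟪gradient L (x + t • v) - g, v⟫_ℝ‖
        ≤ ‖gradient L (x + t • v) - g‖ * ‖v‖ := norm_inner_le_norm _ _
      _ ≤ β * ‖t • v‖ * ‖v‖ := by
          gcongr; simpa using hLip (x + t • v) x
      _ = β * t * ‖v‖ ^ 2 := by rw [norm_smul, Real.norm_of_nonneg ht.1]; ring
  have hB (t : ℝ) : HasDerivAt (fun t : ℝ => β * ‖v‖ ^ 2 / 2 * t ^ 2) (β * t * ‖v‖ ^ 2) t := by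
    refine ((hasDerivAt_pow 2 t).const_mul (β * ‖v‖ ^ 2 / 2)).congr_deriv ?_
    norm_num
    ring
  have := image_norm_le_of_norm_deriv_right_le_deriv_boundary
    (fun t _ => (hderiv t).continuousAt.continuousWithinAt)
    (fun t _ => (hderiv t).hasDerivWithinAt) (by simp) hB hbound (Set.right_mem_Icc.2 zero_le_one)
  simp only [one_smul, one_mul, one_pow, mul_one, Real.norm_eq_abs] at this
  linarith

variable {Ω : Type*} {mΩ : MeasurableSpace Ω} {μ : Measure Ω} {V : Ω → H}

theorem integrable_comp_const_add [IsFiniteMeasure μ] (hL : Differentiable ℝ L)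
    (hLip : ∀ x y, ‖gradient L x - gradient L y‖ ≤ β * ‖x - y‖) (x : H) (hV : MemLp V 2 μ) :
    Integrable (fun ω => L (x + V ω)) μ := by
  have hlin : Integrable (fun ω => L x + ⟪gradient L x, V ω⟫_ℝ) μ :=
    (integrable_const _).add ((hV.integrable one_le_two).const_inner _)
  have hcomp : AEStronglyMeasurable (fun ω => L (x + V ω)) μ :=
    hL.continuous.comp_aestronglyMeasurable (hV.aestronglyMeasurable.const_add x)
  have hrem : Integrable (fun ω => L (x + V ω) - (L x + ⟪gradient L x, V ω⟫_ℝ)) μ := by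
    refine ((hV.integrable_norm_pow two_ne_zero).const_mul (β / 2)).mono'
      (hcomp.sub hlin.aestronglyMeasurable) (ae_of_all _ fun ω => ?_)
    rw [Real.norm_eq_abs, ← sub_sub]
    exact abs_sub_sub_inner_gradient_le hL hLip x (V ω)
  exact (hrem.add hlin).congr (ae_of_all _ fun ω => sub_add_cancel _ _)

theorem integral_comp_const_add_le [IsProbabilityMeasure μ] (hL : Differentiable ℝ L)
    (hLip : ∀ x y, ‖gradient L x - gradient L y‖ ≤ β * ‖x - y‖) (x : H) (hV : MemLp V 2 μ) :
    ∫ ω, L (x + V ω) ∂μ ≤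
      L x + ⟪gradient L x, ∫ ω, V ω ∂μ⟫_ℝ + β / 2 * ∫ ω, ‖V ω‖ ^ 2 ∂μ := by
  have hinner : Integrable (fun ω => ⟪gradient L x, V ω⟫_ℝ) μ :=
    (hV.integrable one_le_two).const_inner _
  have hlin : Integrable (fun ω => L x + ⟪gradient L x, V ω⟫_ℝ) μ := (integrable_const _).add hinner
  have hsq : Integrable (fun ω => ‖V ω‖ ^ 2) μ := hV.integrable_norm_pow two_ne_zero
  calc ∫ ω, L (x + V ω) ∂μ
      ≤ ∫ ω, (L x + ⟪gradient L x, V ω⟫_ℝ + β / 2 * ‖V ω‖ ^ 2) ∂μ := by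
        refine integral_mono (integrable_comp_const_add hL hLip x hV)
          (hlin.add (hsq.const_mul _)) fun ω => ?_
        have := abs_sub_sub_inner_gradient_le hL hLip x (V ω)
        linarith [le_abs_self (L (x + V ω) - L x - ⟪gradient L x, V ω⟫_ℝ)]
    _ = L x + ⟪gradient L x, ∫ ω, V ω ∂μ⟫_ℝ + β / 2 * ∫ ω, ‖V ω‖ ^ 2 ∂μ := by
        rw [integral_add hlin (hsq.const_mul _),
          integral_add (integrable_const _) hinner, integral_inner (hV.integrable one_le_two),
          integral_const_mul]
        simp

end Descent

theorem norm_sq_sub_norm_sub_sq_div_two_le_inner {E : Type*} [NormedAddCommGroup E] [InnerProductSpace ℝ E]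
    (g m : E) : (‖g‖ ^ 2 - ‖m - g‖ ^ 2) / 2 ≤ ⟪g, m⟫_ℝ := by
  rw [norm_sub_sq_real, real_inner_comm]
  linarith [sq_nonneg ‖m‖]

theorem stmt5_general {dc ds : ℕ}
    (β C₁ η B Ωc Ωs : ℝ) (hβ : 0 < β) (hC₁ : 1 ≤ C₁)
    (hη : 0 < η) (hη' : η ≤ 1 / (2 * β * C₁))
    (L : WithLp 2 (EuclideanSpace ℝ (Fin dc) × EuclideanSpace ℝ (Fin ds)) → ℝ)
    (hLdiff : Differentiable ℝ L)
    (hLip : ∀ θ₁ θ₂, ‖gradient L θ₁ - gradient L θ₂‖ ≤ β * ‖θ₁ - θ₂‖)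
    (θ : WithLp 2 (EuclideanSpace ℝ (Fin dc) × EuclideanSpace ℝ (Fin ds)))
    {Ω : Type*} {mΩ : MeasurableSpace Ω} (ℙ : Measure Ω) [IsProbabilityMeasure ℙ]
    (a : Ω → EuclideanSpace ℝ (Fin dc)) (b : Ω → EuclideanSpace ℝ (Fin ds))
    (ha2 : MemLp a 2 ℙ) (hb2 : MemLp b 2 ℙ)
    (hbmean : (∫ ω, b ω ∂ℙ) = (WithLp.equiv 2 _ (gradient L θ)).2)
    (hbsec : (∫ ω, ‖b ω‖ ^ 2 ∂ℙ) ≤ ‖(WithLp.equiv 2 _ (gradient L θ)).2‖ ^ 2 + Ωs)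
    (habias : ‖(∫ ω, a ω ∂ℙ) - (WithLp.equiv 2 _ (gradient L θ)).1‖ ^ 2 ≤ B)
    (hasec : (∫ ω, ‖a ω‖ ^ 2 ∂ℙ) ≤ C₁ * ‖(WithLp.equiv 2 _ (gradient L θ)).1‖ ^ 2 + Ωc) :
    (∫ ω, L ((WithLp.equiv 2 (EuclideanSpace ℝ (Fin dc) × EuclideanSpace ℝ (Fin ds))).symm
        ((WithLp.equiv 2 _ θ).1 - η • a ω, (WithLp.equiv 2 _ θ).2 - η • b ω)) ∂ℙ)
      ≤ L θ - η / 4 * ‖gradient L θ‖ ^ 2 + η / 2 * B + β * η ^ 2 / 2 * (Ωc + Ωs) := by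
  set g := gradient L θ
  simp only [WithLp.equiv_apply, WithLp.ofLp_fst, WithLp.ofLp_snd] at hbmean hbsec habias hasec
  set u : Ω → WithLp 2 (EuclideanSpace ℝ (Fin dc) × EuclideanSpace ℝ (Fin ds)) :=
    fun ω => WithLp.toLp 2 (a ω, b ω)
  have hu : MemLp u 2 ℙ := MemLp.of_fst_of_snd_prodLp ⟨ha2, hb2⟩
  have hmean : ⟪g, ∫ ω, -(η • u ω) ∂ℙ⟫_ℝ = -η * (⟪g.fst, ∫ ω, a ω ∂ℙ⟫_ℝ + ‖g.snd‖ ^ 2) := by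
    have hui : Integrable u ℙ := hu.integrable one_le_two
    simp only [integral_neg, integral_smul, inner_neg_right, inner_smul_right,
      WithLp.prod_inner_apply, WithLp.ofLp_fst, WithLp.ofLp_snd]
    rw [fst_integral_withLp hui, snd_integral_withLp hui]
    simp only [u, WithLp.toLp_fst, WithLp.toLp_snd, hbmean, real_inner_self_eq_norm_sq, neg_mul]
  have hsecond : ∫ ω, ‖-(η • u ω)‖ ^ 2 ∂ℙ = η ^ 2 * (∫ ω, ‖a ω‖ ^ 2 ∂ℙ + ∫ ω, ‖b ω‖ ^ 2 ∂ℙ) := by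
    simp only [norm_neg, norm_smul, mul_pow, Real.norm_eq_abs, sq_abs, WithLp.prod_norm_sq_eq_of_L2,
      u, WithLp.toLp_fst, WithLp.toLp_snd]
    rw [integral_const_mul, integral_add (ha2.integrable_norm_pow two_ne_zero)
      (hb2.integrable_norm_pow two_ne_zero)]
  have hbias : (‖g.fst‖ ^ 2 - B) / 2 ≤ ⟪g.fst, ∫ ω, a ω ∂ℙ⟫_ℝ := by
    linarith [norm_sq_sub_norm_sub_sq_div_two_le_inner g.fst (∫ ω, a ω ∂ℙ)]
  have hnorm : ‖g‖ ^ 2 = ‖g.fst‖ ^ 2 + ‖g.snd‖ ^ 2 := WithLp.prod_norm_sq_eq_of_L2 g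
  have hstep : β * η * C₁ ≤ 1 / 2 := by
    rw [le_div_iff₀ (by positivity)] at hη'
    linarith
  calc _ = ∫ ω, L (θ - η • u ω) ∂ℙ := rfl
    _ = ∫ ω, L (θ + -(η • u ω)) ∂ℙ := by simp only [sub_eq_add_neg]
    _ ≤ _ := integral_comp_const_add_le hLdiff hLip θ (hu.const_smul η).neg
    _ ≤ _ := by
      rw [hmean, hsecond, hnorm]
      have hβη : β * η ≤ 1 / 2 := (le_mul_of_one_le_right (by positivity) hC₁).trans hstep
      linarith [mul_le_mul_of_nonneg_left hbias hη.le,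
        mul_le_mul_of_nonneg_left hasec (by positivity : 0 ≤ β * η ^ 2 / 2),
        mul_le_mul_of_nonneg_left hbsec (by positivity : 0 ≤ β * η ^ 2 / 2),
        mul_le_mul_of_nonneg_right hstep (by positivity : 0 ≤ η * ‖g.fst‖ ^ 2),
        mul_le_mul_of_nonneg_right hβη (by positivity : 0 ≤ η * ‖g.snd‖ ^ 2),
        (by positivity : 0 ≤ η * ‖g.snd‖ ^ 2)]

/-- One-step hybrid-order descent inequality: let `L : ℝ^{d_c} × ℝ^{d_s} → ℝ` be
differentiable with `β`-Lipschitz gradient, fix `θ = (θ_c, θ_s)`, and let `a` (valued in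
`ℝ^{d_c}`) and `b` (valued in `ℝ^{d_s}`) be square-integrable random vectors satisfying
`E[b] = ∇_s L(θ)`, `E[‖b‖²] ≤ ‖∇_s L(θ)‖² + Ω_s`, `‖E[a] − ∇_c L(θ)‖² ≤ B`, and
`E[‖a‖²] ≤ C₁‖∇_c L(θ)‖² + Ω_c`. If `C₁ ≥ 1` and `0 < η ≤ 1/(2βC₁)`, then
`E[L(θ_c − ηa, θ_s − ηb)] ≤ L(θ) − (η/4)‖∇L(θ)‖² + (η/2)B + (βη²/2)(Ω_c + Ω_s)`. -/
theorem stmt5 {dc ds : ℕ} (hdc : 0 < dc) (hds : 0 < ds)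
    (β C₁ η B Ωc Ωs : ℝ) (hβ : 0 < β) (hC₁ : 1 ≤ C₁)
    (hη : 0 < η) (hη' : η ≤ 1 / (2 * β * C₁))
    (hB : 0 ≤ B) (hΩc : 0 ≤ Ωc) (hΩs : 0 ≤ Ωs)
    (L : WithLp 2 (EuclideanSpace ℝ (Fin dc) × EuclideanSpace ℝ (Fin ds)) → ℝ)
    (hLdiff : Differentiable ℝ L)
    (hLip : ∀ θ₁ θ₂, ‖gradient L θ₁ - gradient L θ₂‖ ≤ β * ‖θ₁ - θ₂‖)
    (θ : WithLp 2 (EuclideanSpace ℝ (Fin dc) × EuclideanSpace ℝ (Fin ds)))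
    {Ω : Type*} {mΩ : MeasurableSpace Ω} (ℙ : Measure Ω) [IsProbabilityMeasure ℙ]
    (a : Ω → EuclideanSpace ℝ (Fin dc)) (b : Ω → EuclideanSpace ℝ (Fin ds))
    (ha2 : MemLp a 2 ℙ) (hb2 : MemLp b 2 ℙ)
    (hbmean : (∫ ω, b ω ∂ℙ) = (WithLp.equiv 2 _ (gradient L θ)).2)
    (hbsec : (∫ ω, ‖b ω‖ ^ 2 ∂ℙ) ≤ ‖(WithLp.equiv 2 _ (gradient L θ)).2‖ ^ 2 + Ωs)
    (habias : ‖(∫ ω, a ω ∂ℙ) - (WithLp.equiv 2 _ (gradient L θ)).1‖ ^ 2 ≤ B)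
    (hasec : (∫ ω, ‖a ω‖ ^ 2 ∂ℙ) ≤ C₁ * ‖(WithLp.equiv 2 _ (gradient L θ)).1‖ ^ 2 + Ωc) :
    (∫ ω, L ((WithLp.equiv 2 (EuclideanSpace ℝ (Fin dc) × EuclideanSpace ℝ (Fin ds))).symm
        ((WithLp.equiv 2 _ θ).1 - η • a ω, (WithLp.equiv 2 _ θ).2 - η • b ω)) ∂ℙ)
      ≤ L θ - η / 4 * ‖gradient L θ‖ ^ 2 + η / 2 * B + β * η ^ 2 / 2 * (Ωc + Ωs) :=
  stmt5_general β C₁ η B Ωc Ωs hβ hC₁ hη hη' L hLdiff hLip θ (mΩ := mΩ) ℙ a b ha2 hb2 hbmean hbsec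
    habias hasec
end

section
/- If u is a standard Gaussian random vector in ℝ^d and k is a real number with k ≥ 2, then E[‖u‖^k] ≤ (d + k)^{k/2}. In particular, E[‖u‖³] ≤ (d + 3)^{3/2}. -/
open MeasureTheory ProbabilityTheory
open scoped RealInnerProductSpace

/-- The standard Gaussian measure on `EuclideanSpace ℝ (Fin d)`: the product of `d`
copies of the one-dimensional Gaussian `N(0,1)`. -/
noncomputable def stdGaussian (d : ℕ) : Measure (EuclideanSpace ℝ (Fin d)) :=
  Measure.map (MeasurableEquiv.toLp 2 (Fin d → ℝ))
    (Measure.pi fun _ : Fin d => gaussianReal 0 1)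

/-!
For `0 < t < 1/2` the Chernoff-type bound `x ^ p ≤ (p / t) ^ p e^{-p} e^{t x}` applied to
`x = ‖u‖²` gives `E ‖u‖^{2p} ≤ (p / t) ^ p e^{-p} E e^{t ‖u‖²} = (p / t) ^ p e^{-p} (1 - 2t)^{-d/2}`,
the Gaussian integral factorizing over the coordinates.
The choice `t = p / (d + 2p)` turns the right-hand side into
`(d + 2p) ^ p e^{-p} (1 + 2p/d)^{d/2}`, and `(1 + 2p/d)^{d/2} ≤ e^p`.
-/

open Real

/-- For `1 ≤ 2 * t` both sides are junk `0`: the integrand is not integrable, and `√` of a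
nonpositive number is `0`. -/
lemma integral_exp_mul_sq_gaussianReal (t : ℝ) :
    ∫ z, exp (t * z ^ 2) ∂gaussianReal 0 1 = (√(1 - 2 * t))⁻¹ := by
  have hpdf (z : ℝ) : gaussianPDFReal 0 1 z • exp (t * z ^ 2)
      = (√(2 * π))⁻¹ * exp (-(1 / 2 - t) * z ^ 2) := by
    rw [gaussianPDFReal_def]
    simp only [NNReal.coe_one, mul_one, sub_zero, smul_eq_mul]
    rw [mul_assoc, ← exp_add]
    ring_nf
  rw [integral_gaussianReal_eq_integral_smul one_ne_zero]
  simp_rw [hpdf]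
  rw [integral_const_mul, integral_gaussian, ← sqrt_inv, ← sqrt_mul (by positivity), ← sqrt_inv]
  congr 1
  field_simp

lemma integral_exp_mul_norm_sq_stdGaussian (d : ℕ) (t : ℝ) :
    ∫ x, exp (t * ‖x‖ ^ 2) ∂_root_.stdGaussian d = (√(1 - 2 * t))⁻¹ ^ d := by
  simp_rw [_root_.stdGaussian, integral_map_equiv, EuclideanSpace.norm_sq_eq, Real.norm_eq_abs,
    sq_abs, Finset.mul_sum, exp_sum]
  refine (integral_fintype_prod_eq_pow (fun z ↦ exp (t * z ^ 2))).trans ?_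
  rw [integral_exp_mul_sq_gaussianReal t, Fintype.card_fin]

lemma integrable_exp_mul_norm_sq_stdGaussian (d : ℕ) {t : ℝ} (ht : t < 1 / 2) :
    Integrable (fun x ↦ exp (t * ‖x‖ ^ 2)) (_root_.stdGaussian d) := by
  refine Integrable.of_integral_ne_zero ?_
  rw [integral_exp_mul_norm_sq_stdGaussian d t]
  exact pow_ne_zero _ (inv_ne_zero (sqrt_ne_zero'.2 (by linarith)))

lemma rpow_le_mul_exp {x p t : ℝ} (hx : 0 ≤ x) (hp : 0 < p) (ht : 0 < t) :
    x ^ p ≤ (p / t) ^ p * exp (-p) * exp (t * x) := by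
  set y := t * x / p
  have hy : 0 ≤ y := by positivity
  have hxy : x = p / t * y := by simp only [y]; field_simp
  calc x ^ p = (p / t) ^ p * y ^ p := by rw [hxy, mul_rpow (by positivity) hy]
    _ ≤ (p / t) ^ p * exp (y - 1) ^ p := by
        gcongr
        linarith [add_one_le_exp (y - 1)]
    _ = (p / t) ^ p * exp (-p) * exp (t * x) := by
        rw [← exp_mul, mul_assoc, ← exp_add]
        congr 2
        simp only [y]
        field_simp
        ring

lemma integral_norm_rpow_two_mul_stdGaussian_le (d : ℕ) {p t : ℝ} (hp : 0 < p) (ht₀ : 0 < t)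
    (ht : t < 1 / 2) :
    ∫ x, ‖x‖ ^ (2 * p) ∂_root_.stdGaussian d ≤ (p / t) ^ p * exp (-p) * (√(1 - 2 * t))⁻¹ ^ d := by
  rw [← integral_exp_mul_norm_sq_stdGaussian d t, ← integral_const_mul]
  refine integral_mono_of_nonneg (ae_of_all _ fun x ↦ by positivity)
    ((integrable_exp_mul_norm_sq_stdGaussian d ht).const_mul _) (ae_of_all _ fun x ↦ ?_)
  dsimp only
  rw [rpow_mul (norm_nonneg x), rpow_two]
  exact rpow_le_mul_exp (by positivity) hp ht₀

lemma sqrt_one_add_div_pow_le_exp (d : ℕ) {p : ℝ} (hp : 0 ≤ p) :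
    √(1 + 2 * p / d) ^ d ≤ exp p := by
  refine le_of_pow_le_pow_left₀ two_ne_zero (exp_nonneg p) ?_
  have h := one_sub_div_pow_le_exp_neg (n := d) (t := -(2 * p)) (by linarith [d.cast_nonneg (α := ℝ)])
  rw [neg_div, sub_neg_eq_add, neg_neg] at h
  rwa [pow_right_comm, sq_sqrt (by positivity), ← exp_nat_mul, Nat.cast_ofNat]

theorem integral_norm_rpow_stdGaussian_le {d : ℕ} (hd : 0 < d) {k : ℝ} (hk : 0 < k) :
    ∫ x, ‖x‖ ^ k ∂_root_.stdGaussian d ≤ ((d : ℝ) + k) ^ (k / 2) := by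
  set p := k / 2
  set D := (d : ℝ) + 2 * p
  have hp : 0 < p := by positivity
  have hd' : (0 : ℝ) < d := by exact_mod_cast hd
  have hD : 0 < D := by positivity
  have hDp : p / (p / D) = D := by field_simp
  have hsqrt : (√(1 - 2 * (p / D)))⁻¹ = √(1 + 2 * p / d) := by
    rw [← sqrt_inv, ← inv_inv (1 + 2 * p / d)]
    congr 2
    field_simp
    ring
  calc ∫ x, ‖x‖ ^ k ∂_root_.stdGaussian d = ∫ x, ‖x‖ ^ (2 * p) ∂_root_.stdGaussian d := by
        congr! 3; ring
    _ ≤ D ^ p * exp (-p) * √(1 + 2 * p / d) ^ d := by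
        rw [← hDp, ← hsqrt]
        refine integral_norm_rpow_two_mul_stdGaussian_le d hp (by positivity) ?_
        rw [div_lt_iff₀ hD]
        linarith
    _ ≤ D ^ p * exp (-p) * exp p := by gcongr; exact sqrt_one_add_div_pow_le_exp d hp.le
    _ = ((d : ℝ) + k) ^ (k / 2) := by
        rw [mul_assoc, ← exp_add, neg_add_cancel, exp_zero, mul_one]
        congr 2; ring

theorem stmt11_general {d : ℕ} (hd : 0 < d)
    {Ω : Type*} [MeasureSpace Ω]
    (u : Ω → EuclideanSpace ℝ (Fin d)) (hu : Measurable u)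
    (hlaw : Measure.map u ℙ = stdGaussian d)
    (k : ℝ) (hk : 2 ≤ k) :
    (∫ ω, ‖u ω‖ ^ k ∂ℙ ≤ ((d : ℝ) + k) ^ (k / 2)) ∧
      (∫ ω, ‖u ω‖ ^ (3 : ℝ) ∂ℙ ≤ ((d : ℝ) + 3) ^ ((3 : ℝ) / 2)) := by
  have moment {k : ℝ} (hk : 0 < k) : ∫ ω, ‖u ω‖ ^ k ∂ℙ ≤ ((d : ℝ) + k) ^ (k / 2) := by
    have hmeas : AEStronglyMeasurable (fun x : EuclideanSpace ℝ (Fin d) ↦ ‖x‖ ^ k)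
        (Measure.map u ℙ) := (continuous_norm.rpow_const fun _ ↦ Or.inr hk.le).aestronglyMeasurable
    rw [← integral_map hu.aemeasurable hmeas, hlaw]
    exact integral_norm_rpow_stdGaussian_le hd hk
  exact ⟨moment (by linarith), moment (by norm_num)⟩

/-- If `u` is a standard Gaussian random vector in `ℝ^d` and `k` is a real number with `k ≥ 2`,
then `E[‖u‖^k] ≤ (d + k)^{k/2}`. In particular, `E[‖u‖³] ≤ (d + 3)^{3/2}`. -/
theorem stmt11 {d : ℕ} (hd : 0 < d)
    {Ω : Type*} [MeasureSpace Ω] [IsProbabilityMeasure (ℙ : Measure Ω)]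
    (u : Ω → EuclideanSpace ℝ (Fin d)) (hu : Measurable u)
    (hlaw : Measure.map u ℙ = stdGaussian d)
    (k : ℝ) (hk : 2 ≤ k) :
    (∫ ω, ‖u ω‖ ^ k ∂ℙ ≤ ((d : ℝ) + k) ^ (k / 2)) ∧
      (∫ ω, ‖u ω‖ ^ (3 : ℝ) ∂ℙ ≤ ((d : ℝ) + 3) ^ ((3 : ℝ) / 2)) :=
  stmt11_general hd u hu hlaw k hk
end

section
/- Let u_1, …, u_P be i.i.d. standard Gaussian random vectors in ℝ^d, let c ≥ 0, and let δ_1, …, δ_P : ℝ^d → ℝ be measurable functions satisfying |δ_p(x)| ≤ c·‖x‖² for all x ∈ ℝ^d and all p. Then E[‖(1/P) Σ_{p=1}^P δ_p(u_p) u_p‖²] ≤ c²·d(d + 2)(d + 4). -/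
open MeasureTheory ProbabilityTheory
open scoped RealInnerProductSpace

/-! Since `‖·‖²` is convex, the squared norm of the average of the `δ_p(u_p) u_p` is at most the
average of `‖δ_p(u_p) u_p‖² ≤ c² ‖u_p‖⁶`, so everything reduces to the sixth moment
`E ‖u‖⁶ = d (d + 2) (d + 4)` of a standard Gaussian vector. Expanding `‖u‖⁶ = (∑ₗ uₗ²)³` into
monomials `uᵢ² uⱼ² uₖ²`, each factorises over the coordinates into one-dimensional moments
`E x²ⁿ = (2n - 1)‼`, which come from the Gamma integral `Γ(n + 1/2) = (2n - 1)‼ √π / 2ⁿ`. -/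

open Real Set Finset
open scoped Nat

lemma integral_pow_two_mul_mul_exp_neg_sq_div_two (n : ℕ) :
    ∫ x : ℝ, x ^ (2 * n) * exp (-x ^ 2 / 2) = √(2 * π) * (2 * n - 1 : ℕ)‼ := by
  have hIoi : ∫ x in Ioi (0 : ℝ), x ^ (2 * n) * exp (-x ^ 2 / 2)
      = (1 / 2 : ℝ) ^ (-(((2 * n : ℕ) : ℝ) + 1) / 2) * (1 / 2)
        * Gamma ((((2 * n : ℕ) : ℝ) + 1) / 2) := by
    rw [← integral_rpow_mul_exp_neg_mul_rpow two_pos (by linarith [(2 * n).cast_nonneg (α := ℝ)])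
      one_half_pos]
    refine setIntegral_congr_fun measurableSet_Ioi fun x _ => ?_
    rw [rpow_two, rpow_natCast]
    ring_nf
  have hpow : (1 / 2 : ℝ) ^ (-(((2 * n : ℕ) : ℝ) + 1) / 2) = 2 ^ n * √2 := by
    rw [one_div, inv_rpow zero_le_two, ← rpow_neg zero_le_two, sqrt_eq_rpow, ← rpow_natCast,
      ← rpow_add two_pos]
    push_cast
    ring_nf
  calc ∫ x : ℝ, x ^ (2 * n) * exp (-x ^ 2 / 2)
      = ∫ x : ℝ, |x| ^ (2 * n) * exp (-|x| ^ 2 / 2) := by simp [pow_mul]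
    _ = 2 * ∫ x in Ioi (0 : ℝ), x ^ (2 * n) * exp (-x ^ 2 / 2) :=
        integral_comp_abs (f := fun x => x ^ (2 * n) * exp (-x ^ 2 / 2))
    _ = √(2 * π) * (2 * n - 1 : ℕ)‼ := by
        rw [hIoi, hpow, show (((2 * n : ℕ) : ℝ) + 1) / 2 = n + 1 / 2 by push_cast; ring,
          Gamma_nat_add_half, sqrt_mul zero_le_two]
        field_simp

lemma integral_pow_two_mul_gaussianReal (n : ℕ) :
    ∫ x, x ^ (2 * n) ∂gaussianReal 0 1 = (2 * n - 1 : ℕ)‼ := by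
  have hπ : √(2 * π) ≠ 0 := by positivity
  calc ∫ x, x ^ (2 * n) ∂gaussianReal 0 1
      = (√(2 * π))⁻¹ * ∫ x : ℝ, x ^ (2 * n) * exp (-x ^ 2 / 2) := by
        simp only [integral_gaussianReal_eq_integral_smul one_ne_zero, gaussianPDFReal,
          smul_eq_mul, ← integral_const_mul]
        congr with x
        simp only [NNReal.coe_one, mul_one, sub_zero]
        ring
    _ = (2 * n - 1 : ℕ)‼ := by
        rw [integral_pow_two_mul_mul_exp_neg_sq_div_two, inv_mul_cancel_left₀ hπ]

lemma integrable_pow_gaussianReal (k : ℕ) : Integrable (fun x : ℝ => x ^ k) (gaussianReal 0 1) :=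
  (integrable_norm_iff (by fun_prop)).1 <| by
    simpa [norm_pow] using (memLp_id_gaussianReal (μ := 0) (v := 1) k).integrable_norm_pow'

section ProductGaussian

variable {ι : Type*} [Fintype ι]

lemma integrable_prod_pow_pi_gaussianReal (m : ι → ℕ) :
    Integrable (fun y : ι → ℝ => ∏ l, y l ^ m l) (Measure.pi fun _ => gaussianReal 0 1) :=
  Integrable.fintype_prod (f := fun l t => t ^ m l) fun l => integrable_pow_gaussianReal (m l)

lemma integral_prod_pow_pi_gaussianReal (m : ι → ℕ) :
    ∫ y : ι → ℝ, ∏ l, y l ^ m l ∂(Measure.pi fun _ => gaussianReal 0 1)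
      = ∏ l, ∫ t, t ^ m l ∂gaussianReal 0 1 :=
  integral_fintype_prod_eq_prod (f := fun l t => t ^ m l)

lemma sq_mul_sq_mul_sq_eq_prod_pow [DecidableEq ι] (i j k : ι) (y : ι → ℝ) :
    y i ^ 2 * y j ^ 2 * y k ^ 2 = ∏ l, y l ^ (2 * ((if l = i then 1 else 0)
      + (if l = j then 1 else 0) + (if l = k then 1 else 0))) := by
  simp only [pow_mul, pow_add, prod_mul_distrib, pow_ite, pow_one, pow_zero, Fintype.prod_ite_eq']

lemma integrable_sq_mul_sq_mul_sq_pi_gaussianReal (i j k : ι) :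
    Integrable (fun y : ι → ℝ => y i ^ 2 * y j ^ 2 * y k ^ 2)
      (Measure.pi fun _ => gaussianReal 0 1) := by
  classical
  simp only [sq_mul_sq_mul_sq_eq_prod_pow i j k]
  exact integrable_prod_pow_pi_gaussianReal _

lemma integral_sq_mul_sq_mul_sq_pi_gaussianReal [DecidableEq ι] (i j k : ι) :
    ∫ y : ι → ℝ, y i ^ 2 * y j ^ 2 * y k ^ 2 ∂(Measure.pi fun _ => gaussianReal 0 1)
      = 1 + 2 * ((if i = j then 1 else 0) + (if i = k then 1 else 0) + (if j = k then 1 else 0))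
        + 8 * (if i = j ∧ j = k then 1 else 0) := by
  simp only [sq_mul_sq_mul_sq_eq_prod_pow i j k, integral_prod_pow_pi_gaussianReal,
    integral_pow_two_mul_gaussianReal]
  rcases eq_or_ne i j with rfl | hij <;> rcases eq_or_ne i k with rfl | hik
  · rw [Fintype.prod_eq_single i fun l hl => by simp [hl]]
    norm_num [Nat.doubleFactorial]
  · rw [Fintype.prod_eq_single i fun l hl => by split_ifs <;> simp_all]
    norm_num [hik, Nat.doubleFactorial]
  · rw [Fintype.prod_eq_single i fun l hl => by split_ifs <;> simp_all]
    norm_num [hij, hij.symm, Nat.doubleFactorial]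
  · rcases eq_or_ne j k with rfl | hjk
    · rw [Fintype.prod_eq_single j fun l hl => by split_ifs <;> simp_all]
      norm_num [hij, hij.symm, Nat.doubleFactorial]
    · rw [Finset.prod_eq_one fun l _ => by split_ifs <;> simp_all]
      simp [hij, hik, hjk]

lemma integral_sum_sq_pow_three_pi_gaussianReal :
    ∫ y : ι → ℝ, (∑ l, y l ^ 2) ^ 3 ∂(Measure.pi fun _ => gaussianReal 0 1)
      = (Fintype.card ι : ℝ) * (Fintype.card ι + 2) * (Fintype.card ι + 4) := by
  classical
  have hint := integrable_sq_mul_sq_mul_sq_pi_gaussianReal (ι := ι)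
  simp only [pow_three', sum_mul, mul_sum]
  rw [integral_finsetSum _ fun i _ => integrable_finsetSum _ fun j _ =>
    integrable_finsetSum _ fun k _ => hint k j i]
  simp only [integral_finsetSum _ fun _ _ => integrable_finsetSum _ fun _ _ => hint _ _ _,
    integral_finsetSum _ fun _ _ => hint _ _ _, integral_sq_mul_sq_mul_sq_pi_gaussianReal]
  simp only [ite_and, mul_ite, mul_one, mul_zero, sum_add_distrib, sum_const, card_univ,
    nsmul_eq_mul, ← mul_sum, sum_ite_eq', Finset.mem_univ, ↓reduceIte]
  ring

lemma integrable_sum_sq_pow_three_pi_gaussianReal :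
    Integrable (fun y : ι → ℝ => (∑ l, y l ^ 2) ^ 3) (Measure.pi fun _ => gaussianReal 0 1) := by
  simp only [pow_three', sum_mul, mul_sum]
  exact integrable_finsetSum _ fun i _ => integrable_finsetSum _ fun j _ =>
    integrable_finsetSum _ fun k _ => integrable_sq_mul_sq_mul_sq_pi_gaussianReal k j i

end ProductGaussian

lemma EuclideanSpace.norm_pow_six {ι : Type*} [Fintype ι] (x : EuclideanSpace ℝ ι) :
    ‖x‖ ^ 6 = (∑ l, x l ^ 2) ^ 3 := by
  rw [show 6 = 2 * 3 from rfl, pow_mul, EuclideanSpace.real_norm_sq_eq]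

lemma integral_norm_pow_six_stdGaussian (d : ℕ) :
    ∫ x, ‖x‖ ^ 6 ∂stdGaussian d = (d : ℝ) * (d + 2) * (d + 4) := by
  rw [_root_.stdGaussian, integral_map_equiv]
  simpa [EuclideanSpace.norm_pow_six] using integral_sum_sq_pow_three_pi_gaussianReal (ι := Fin d)

lemma integrable_norm_pow_six_stdGaussian (d : ℕ) :
    Integrable (fun x : EuclideanSpace ℝ (Fin d) => ‖x‖ ^ 6) (stdGaussian d) := by
  rw [_root_.stdGaussian, integrable_map_equiv]
  simpa [Function.comp_def, EuclideanSpace.norm_pow_six]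
    using integrable_sum_sq_pow_three_pi_gaussianReal (ι := Fin d)

lemma norm_inv_card_smul_sum_sq_le {ι E : Type*} [SeminormedAddCommGroup E] [NormedSpace ℝ E]
    (s : Finset ι) (f : ι → E) :
    ‖(#s : ℝ)⁻¹ • ∑ i ∈ s, f i‖ ^ 2 ≤ (#s : ℝ)⁻¹ * ∑ i ∈ s, ‖f i‖ ^ 2 := by
  rcases s.eq_empty_or_nonempty with rfl | hs
  · simp
  have hcard : (0 : ℝ) < #s := by exact_mod_cast hs.card_pos
  calc ‖(#s : ℝ)⁻¹ • ∑ i ∈ s, f i‖ ^ 2 = (#s : ℝ)⁻¹ ^ 2 * ‖∑ i ∈ s, f i‖ ^ 2 := by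
        rw [norm_smul, mul_pow, Real.norm_of_nonneg (by positivity)]
    _ ≤ (#s : ℝ)⁻¹ ^ 2 * (#s * ∑ i ∈ s, ‖f i‖ ^ 2) := by
        gcongr
        exact (pow_le_pow_left₀ (norm_nonneg _) (norm_sum_le _ _) 2).trans
          (sq_sum_le_card_mul_sum_sq ..)
    _ = (#s : ℝ)⁻¹ * ∑ i ∈ s, ‖f i‖ ^ 2 := by field_simp

lemma norm_smul_sq_le_of_abs_le {E : Type*} [SeminormedAddCommGroup E] [NormedSpace ℝ E]
    {a c : ℝ} {x : E} (h : |a| ≤ c * ‖x‖ ^ 2) : ‖a • x‖ ^ 2 ≤ c ^ 2 * ‖x‖ ^ 6 := by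
  calc ‖a • x‖ ^ 2 = |a| ^ 2 * ‖x‖ ^ 2 := by rw [norm_smul, mul_pow, Real.norm_eq_abs]
    _ ≤ (c * ‖x‖ ^ 2) ^ 2 * ‖x‖ ^ 2 := by gcongr
    _ = c ^ 2 * ‖x‖ ^ 6 := by ring

theorem stmt12_general {d P : ℕ} (hP : 0 < P)
    {Ω : Type*} [MeasureSpace Ω]
    (u : Fin P → Ω → EuclideanSpace ℝ (Fin d)) (hu : ∀ p, Measurable (u p))
    (hlaw : ∀ p, Measure.map (u p) ℙ = stdGaussian d)
    (c : ℝ)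
    (δ : Fin P → EuclideanSpace ℝ (Fin d) → ℝ)
    (hδ : ∀ p x, |δ p x| ≤ c * ‖x‖ ^ 2) :
    ∫ ω, ‖(P : ℝ)⁻¹ • ∑ p : Fin P, δ p (u p ω) • u p ω‖ ^ 2 ∂ℙ
      ≤ c ^ 2 * ((d : ℝ) * ((d : ℝ) + 2) * ((d : ℝ) + 4)) := by
  have hint (p : Fin P) : Integrable (fun ω => ‖u p ω‖ ^ 6) ℙ :=
    (hlaw p ▸ integrable_norm_pow_six_stdGaussian d).comp_aemeasurable (hu p).aemeasurable
  have hmom (p : Fin P) : ∫ ω, ‖u p ω‖ ^ 6 ∂ℙ = (d : ℝ) * (d + 2) * (d + 4) := by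
    rw [← integral_norm_pow_six_stdGaussian d, ← hlaw p,
      integral_map (hu p).aemeasurable (by fun_prop)]
  have hbound (ω : Ω) : ‖(P : ℝ)⁻¹ • ∑ p : Fin P, δ p (u p ω) • u p ω‖ ^ 2
      ≤ (P : ℝ)⁻¹ * ∑ p : Fin P, c ^ 2 * ‖u p ω‖ ^ 6 := by
    have := norm_inv_card_smul_sum_sq_le univ fun p => δ p (u p ω) • u p ω
    rw [card_univ, Fintype.card_fin] at this
    exact this.trans (by gcongr with p; exact norm_smul_sq_le_of_abs_le (hδ p _))
  calc ∫ ω, ‖(P : ℝ)⁻¹ • ∑ p : Fin P, δ p (u p ω) • u p ω‖ ^ 2 ∂ℙ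
      ≤ ∫ ω, (P : ℝ)⁻¹ * ∑ p : Fin P, c ^ 2 * ‖u p ω‖ ^ 6 ∂ℙ :=
        integral_mono_of_nonneg (ae_of_all _ fun _ => by positivity)
          ((integrable_finsetSum _ fun p _ => (hint p).const_mul _).const_mul _)
          (ae_of_all _ hbound)
    _ = c ^ 2 * ((d : ℝ) * ((d : ℝ) + 2) * ((d : ℝ) + 4)) := by
        rw [integral_const_mul, integral_finsetSum _ fun p _ => (hint p).const_mul _]
        simp only [integral_const_mul, hmom, sum_const, card_univ, Fintype.card_fin, nsmul_eq_mul]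
        field_simp

/-- Let `u_1, …, u_P` be i.i.d. standard Gaussian random vectors in `ℝ^d`, let `c ≥ 0`, and let
`δ_1, …, δ_P : ℝ^d → ℝ` be measurable functions with `|δ_p(x)| ≤ c‖x‖²` for all `x` and `p`.
Then `E[‖(1/P) Σ_p δ_p(u_p) u_p‖²] ≤ c²·d(d + 2)(d + 4)`. -/
theorem stmt12 {d P : ℕ} (hd : 0 < d) (hP : 0 < P)
    {Ω : Type*} [MeasureSpace Ω] [IsProbabilityMeasure (ℙ : Measure Ω)]
    (u : Fin P → Ω → EuclideanSpace ℝ (Fin d)) (hu : ∀ p, Measurable (u p))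
    (hindep : iIndepFun u ℙ)
    (hlaw : ∀ p, Measure.map (u p) ℙ = stdGaussian d)
    (c : ℝ) (hc : 0 ≤ c)
    (δ : Fin P → EuclideanSpace ℝ (Fin d) → ℝ) (hδmeas : ∀ p, Measurable (δ p))
    (hδ : ∀ p x, |δ p x| ≤ c * ‖x‖ ^ 2) :
    ∫ ω, ‖(P : ℝ)⁻¹ • ∑ p : Fin P, δ p (u p ω) • u p ω‖ ^ 2 ∂ℙ
      ≤ c ^ 2 * ((d : ℝ) * ((d : ℝ) + 2) * ((d : ℝ) + 4)) :=
  stmt12_general hP u hu hlaw c δ hδ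
end
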